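/- arXiv:2106.12363 — 2 statements merged into one kernel-verified Lean document; each statement's English description precedes it below -/
import Mathlib

section
/- A vector v in R^n over a PID R is primitive (its span is a direct summand of R^n) if and only if the greatest common divisor of its coordinates is a unit. -/
/-!
The line `R ∙ v` through a nonzero vector of a torsion-free module is a direct summand exactly
when some linear form takes the value `1` at `v`: project onto `R ∙ v ≅ R` in one direction, split
off `ker f` in the other. On `R^n` the values of linear forms at `v` are the combinations
`∑ cᵢ vᵢ`, so such a form exists iff the coordinates of `v` generate the unit ideal, and over a
Bézout domain that ideal is generated by their gcd.
-/

open Submodule in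
theorem LinearMap.isCompl_span_singleton_ker {R M : Type*} [CommRing R] [AddCommGroup M]
    [Module R M] {v : M} (f : M →ₗ[R] R) (hfv : f v = 1) : IsCompl (R ∙ v) (ker f) := by
  refine ⟨disjoint_def.2 fun x hx hxf => ?_, codisjoint_iff_le_sup.2 fun x _ => ?_⟩
  · obtain ⟨a, rfl⟩ := mem_span_singleton.1 hx
    obtain rfl : a = 0 := by simpa [hfv] using hxf
    exact zero_smul R v
  · refine mem_sup.2 ⟨f x • v, smul_mem _ _ (mem_span_singleton_self v), x - f x • v, ?_,
      add_sub_cancel _ _⟩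
    simp [hfv]

theorem Submodule.exists_isCompl_span_singleton_iff_exists_apply_eq_one {R M : Type*}
    [CommRing R] [IsDomain R] [AddCommGroup M] [Module R M] [Module.IsTorsionFree R M] {v : M}
    (hv : v ≠ 0) :
    (∃ W : Submodule R M, IsCompl (R ∙ v) W) ↔ ∃ f : M →ₗ[R] R, f v = 1 := by
  constructor
  · rintro ⟨W, hW⟩
    refine ⟨LinearEquiv.coord R M v hv ∘ₗ (R ∙ v).projectionOnto W hW, ?_⟩
    simpa [projectionOnto_apply_left hW ⟨v, mem_span_singleton_self v⟩]
      using LinearEquiv.coord_self R M v hv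
  · rintro ⟨f, hfv⟩
    exact ⟨_, f.isCompl_span_singleton_ker hfv⟩

theorem exists_linearMap_apply_eq_one_iff_span_range_eq_top {R ι : Type*} [CommRing R]
    [Fintype ι] (v : ι → R) :
    (∃ f : (ι → R) →ₗ[R] R, f v = 1) ↔ Ideal.span (Set.range v) = ⊤ := by
  classical
  rw [Ideal.eq_top_iff_one, Ideal.mem_span_range_iff_exists_fun]
  constructor
  · rintro ⟨f, hfv⟩
    refine ⟨fun i => f fun j => if i = j then 1 else 0, ?_⟩
    simpa [mul_comm, f.pi_apply_eq_sum_univ v] using hfv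
  · rintro ⟨c, hc⟩
    refine ⟨Fintype.linearCombination R c, ?_⟩
    simpa [Fintype.linearCombination_apply, mul_comm] using hc

theorem Finset.span_gcd {R ι : Type*} [CommRing R] [IsDomain R] [IsBezout R]
    [NormalizedGCDMonoid R] (s : Finset ι) (f : ι → R) :
    Ideal.span {s.gcd f} = Ideal.span (f '' s) := by
  classical
  induction s using Finset.induction_on with
  | empty => simp
  | insert a s _ ih =>
    rw [Finset.gcd_insert, _root_.span_gcd, Ideal.span_insert, ih, Finset.coe_insert,
      Set.image_insert_eq, ← Ideal.span_insert]

/-- over a PID, a nonzero vector `v : Fin n → R` is primitive (its span is a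
direct summand of `R^n`) iff the gcd of its coordinates is a unit. -/
theorem stmt7 (R : Type*) [CommRing R] [IsDomain R] [IsPrincipalIdealRing R] [NormalizedGCDMonoid R]
    (n : ℕ) (v : Fin n → R) (hv : v ≠ 0) :
    (∃ W : Submodule R (Fin n → R), IsCompl (Submodule.span R {v}) W) ↔
      IsUnit (Finset.univ.gcd v) := by
  rw [Submodule.exists_isCompl_span_singleton_iff_exists_apply_eq_one hv,
    exists_linearMap_apply_eq_one_iff_span_range_eq_top, ← Ideal.span_singleton_eq_top,
    Finset.span_gcd, Finset.coe_univ, Set.image_univ]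
end

section
/- Let R be a PID, let P be a finitely generated free R-module, and let V, W, C be direct summands of P with V ∩ W = 0, V + W a proper direct summand of P, W ⊕ C = P, and V ⊆ C. Then the assignment (A,B) ↦ (A, B ∩ C) defines an order-isomorphism from the poset of splittings (A,B) of P with A ⊆ V and W ⊆ B onto the poset of splittings (A',B') of C with A' ⊆ V, with inverse (A',B') ↦ (A', B' ⊕ W). Here a splitting of P is a pair of nonzero proper direct summands (A,B) with A ⊕ B = P, ordered by (A,B) ≤ (A',B') iff A is a summand of A' and B' is a summand of B. -/
/-!
Everything happens in the modular lattice of submodules: since `W ⊕ C = P`, modularity makes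
`B ↦ B ⊓ C` and `B' ↦ B' ⊔ W` mutually inverse order isomorphisms between the submodules
containing `W` and the submodules of `C`. A relative complement `D` of `B₁` in `B` is carried
to the relative complement `(D ⊔ W) ⊓ C` of `B₁ ⊓ C` in `B ⊓ C`, and conversely a complement
of `B₁ ⊓ C` in `B ⊓ C` is already one of `B₁` in `B`. The properness of `V ⊔ W` rules out the
degenerate case `B ⊓ C = ⊥`, i.e. `B = W`.
-/

section

variable {R P : Type*} [CommRing R] [IsDomain R] [IsPrincipalIdealRing R]
  [AddCommGroup P] [Module R P]

def IsSummandIn (A A' : Submodule R P) : Prop :=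
  A ≤ A' ∧ ∃ C : Submodule R P, C ≤ A' ∧ A ⊓ C = ⊥ ∧ A ⊔ C = A'

def IsSplitting (A B : Submodule R P) : Prop :=
  A ≠ ⊥ ∧ B ≠ ⊥ ∧ A ≠ ⊤ ∧ B ≠ ⊤ ∧ A ⊓ B = ⊥ ∧ A ⊔ B = ⊤

def IsSplittingOf (C A B : Submodule R P) : Prop :=
  A ≠ ⊥ ∧ B ≠ ⊥ ∧ A ≠ C ∧ B ≠ C ∧ A ≤ C ∧ B ≤ C ∧ A ⊓ B = ⊥ ∧ A ⊔ B = C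

/-- `(A, B) ≤ (A', B')` in the poset of splittings. -/
def SplitLE (A B A' B' : Submodule R P) : Prop :=
  IsSummandIn A A' ∧ IsSummandIn B' B

section ModularLattice

variable {α : Type*} [Lattice α] [BoundedOrder α] [IsModularLattice α] {b b₁ c d e w : α}

lemma inf_sup_cancel_of_codisjoint (hwc : Codisjoint w c) (hwb : w ≤ b) : b ⊓ c ⊔ w = b := by
  rw [inf_sup_assoc_of_le c hwb, sup_comm, hwc.eq_top, inf_top_eq]

lemma sup_inf_cancel_of_disjoint (hwc : Disjoint w c) (hbc : b ≤ c) : (b ⊔ w) ⊓ c = b := by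
  rw [sup_inf_assoc_of_le w hbc, hwc.eq_bot, sup_bot_eq]

lemma inf_inf_sup_inf_eq_bot (hwc : IsCompl w c) (hwb₁ : w ≤ b₁) (hd : b₁ ⊓ d = ⊥) :
    b₁ ⊓ c ⊓ ((d ⊔ w) ⊓ c) = ⊥ := by
  calc b₁ ⊓ c ⊓ ((d ⊔ w) ⊓ c) = (b₁ ⊓ d ⊔ w) ⊓ c := by
        rw [← inf_inf_distrib_right, ← inf_sup_assoc_of_le d hwb₁]
    _ = ⊥ := by rw [hd, bot_sup_eq, hwc.inf_eq_bot]

lemma inf_sup_sup_inf_eq (hwc : Codisjoint w c) (hwb₁ : w ≤ b₁) (hd : b₁ ⊔ d = b) :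
    b₁ ⊓ c ⊔ (d ⊔ w) ⊓ c = b ⊓ c := by
  calc b₁ ⊓ c ⊔ (d ⊔ w) ⊓ c = (b₁ ⊓ c ⊔ w ⊔ d) ⊓ c := by
        rw [← sup_inf_assoc_of_le _ inf_le_right, sup_comm d w, sup_assoc]
    _ = b ⊓ c := by rw [inf_sup_cancel_of_codisjoint hwc hwb₁, hd]

lemma sup_eq_of_inf_sup_eq (hwc : Codisjoint w c) (hwb₁ : w ≤ b₁) (hwb : w ≤ b)
    (he : b₁ ⊓ c ⊔ e = b ⊓ c) : b₁ ⊔ e = b := by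
  rw [← inf_sup_cancel_of_codisjoint hwc hwb₁, sup_right_comm, he,
    inf_sup_cancel_of_codisjoint hwc hwb]

end ModularLattice

section Splittings

variable {R P : Type*} [CommRing R] [AddCommGroup P] [Module R P]
  {V W C A B B₁ : Submodule R P}

lemma isSummandIn_iff_isSummandIn_inf (hWC : IsCompl W C) (hWB : W ≤ B) (hWB₁ : W ≤ B₁) :
    IsSummandIn B₁ B ↔ IsSummandIn (B₁ ⊓ C) (B ⊓ C) := by
  constructor
  · rintro ⟨hle, D, hDB, hdisj, hsup⟩
    refine ⟨inf_le_inf_right C hle, (D ⊔ W) ⊓ C, inf_le_inf_right C (sup_le hDB hWB),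
      inf_inf_sup_inf_eq_bot hWC hWB₁ hdisj, inf_sup_sup_inf_eq hWC.codisjoint hWB₁ hsup⟩
  · rintro ⟨-, E, hEBC, hdisj, hsup⟩
    have hsup' := sup_eq_of_inf_sup_eq hWC.codisjoint hWB₁ hWB hsup
    rw [inf_assoc, inf_eq_right.2 (hEBC.trans inf_le_right)] at hdisj
    exact ⟨hsup' ▸ le_sup_left, E, hEBC.trans inf_le_left, hdisj, hsup'⟩

lemma isSplittingOf_inf_of_isSplitting (hWC : IsCompl W C) (hproper : V ⊔ W ≠ ⊤) (hVC : V ≤ C)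
    (hS : IsSplitting A B) (hAV : A ≤ V) (hWB : W ≤ B) : IsSplittingOf C A (B ⊓ C) := by
  obtain ⟨hA0, -, -, hBtop, hAB, hABtop⟩ := hS
  have hBC0 : B ⊓ C ≠ ⊥ := by
    intro hBC
    have hBW : B = W := by
      rw [← inf_sup_cancel_of_codisjoint hWC.codisjoint hWB, hBC, bot_sup_eq]
    exact hproper (top_unique (hABtop ▸ hBW ▸ sup_le_sup_right hAV B))
  have hAC : A ≤ C := hAV.trans hVC
  refine ⟨hA0, hBC0, ?_, ?_, hAC, inf_le_right, ?_, ?_⟩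
  · rintro rfl
    exact hBC0 (inf_comm B A ▸ hAB)
  · intro hBC
    exact hBtop (top_unique (hWC.sup_eq_top ▸ sup_le hWB (hBC ▸ inf_le_left)))
  · exact eq_bot_iff.2 (hAB ▸ inf_le_inf_left A inf_le_left)
  · rw [← sup_inf_assoc_of_le B hAC, hABtop, top_inf_eq]

lemma isSplitting_sup_of_isSplittingOf (hWC : IsCompl W C) (hproper : V ⊔ W ≠ ⊤)
    (hS : IsSplittingOf C A B) (hAV : A ≤ V) : IsSplitting A (B ⊔ W) := by
  obtain ⟨hA0, hB0, -, hBC, hAC, hBle, hAB, hABC⟩ := hS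
  have hround := sup_inf_cancel_of_disjoint hWC.disjoint hBle
  refine ⟨hA0, ?_, ?_, ?_, ?_, ?_⟩
  · exact fun h => hB0 (le_bot_iff.1 (h ▸ le_sup_left))
  · exact fun h => hproper (top_unique (h ▸ hAV.trans le_sup_left))
  · exact fun h => hBC (by rw [← hround, h, top_inf_eq])
  · rw [← inf_eq_left.2 hAC, inf_assoc, inf_comm C, hround, hAB]
  · rw [← sup_assoc, hABC, sup_comm, hWC.sup_eq_top]

end Splittings

theorem stmt9_general
    (V W C : Submodule R P)
    (hproper : (∃ D, IsCompl (V ⊔ W) D) ∧ V ⊔ W ≠ ⊤)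
    (hWC : W ⊓ C = ⊥ ∧ W ⊔ C = ⊤) (hVC : V ≤ C) :
    -- well-definedness of `(A,B) ↦ (A, B ⊓ C)`
    (∀ A B : Submodule R P, IsSplitting A B → A ≤ V → W ≤ B →
      IsSplittingOf C A (B ⊓ C) ∧ A ≤ V) ∧
    -- well-definedness of the inverse `(A',B') ↦ (A', B' ⊔ W)`
    (∀ A' B' : Submodule R P, IsSplittingOf C A' B' → A' ≤ V →
      IsSplitting A' (B' ⊔ W) ∧ A' ≤ V ∧ W ≤ B' ⊔ W) ∧
    -- the two maps are mutually inverse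
    (∀ A B : Submodule R P, IsSplitting A B → A ≤ V → W ≤ B → (B ⊓ C) ⊔ W = B) ∧
    (∀ A' B' : Submodule R P, IsSplittingOf C A' B' → A' ≤ V → (B' ⊔ W) ⊓ C = B') ∧
    -- the forward map is an order-embedding (preserves and reflects the order)
    (∀ A B A₁ B₁ : Submodule R P,
      IsSplitting A B → A ≤ V → W ≤ B → IsSplitting A₁ B₁ → A₁ ≤ V → W ≤ B₁ →
      (SplitLE A B A₁ B₁ ↔ SplitLE A (B ⊓ C) A₁ (B₁ ⊓ C))) := by
  have hWC : IsCompl W C := IsCompl.of_eq hWC.1 hWC.2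
  refine ⟨?_, ?_, ?_, ?_, ?_⟩
  · exact fun A B hS hAV hWB =>
      ⟨isSplittingOf_inf_of_isSplitting hWC hproper.2 hVC hS hAV hWB, hAV⟩
  · exact fun A' B' hS hAV =>
      ⟨isSplitting_sup_of_isSplittingOf hWC hproper.2 hS hAV, hAV, le_sup_right⟩
  · exact fun A B _ _ hWB => inf_sup_cancel_of_codisjoint hWC.codisjoint hWB
  · exact fun A' B' ⟨_, _, _, _, _, hB'C, _⟩ _ =>
      sup_inf_cancel_of_disjoint hWC.disjoint hB'C
  · exact fun A B A₁ B₁ _ _ hWB _ _ hWB₁ =>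
      and_congr Iff.rfl (isSummandIn_iff_isSummandIn_inf hWC hWB hWB₁)

/-- cutting down, Lemma 4.8 of the paper: for `V, W, C` summands of a f.g. free
module `P` over a PID with `V ⊓ W = ⊥`, `V ⊔ W` a proper summand of `P`, `W ⊕ C = P` and
`V ≤ C`, the assignment `(A,B) ↦ (A, B ⊓ C)` is an order-isomorphism from the poset of
splittings `(A,B)` of `P` with `A ≤ V` and `W ≤ B` onto the poset of splittings `(A',B')` of
`C` with `A' ≤ V`, with inverse `(A',B') ↦ (A', B' ⊔ W)`. -/
theorem stmt9 [Module.Finite R P] [Module.Free R P]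
    (V W C : Submodule R P)
    (hV : ∃ V', IsCompl V V') (hW : ∃ W', IsCompl W W') (hC : ∃ C', IsCompl C C')
    (hVW : V ⊓ W = ⊥)
    (hproper : (∃ D, IsCompl (V ⊔ W) D) ∧ V ⊔ W ≠ ⊤)
    (hWC : W ⊓ C = ⊥ ∧ W ⊔ C = ⊤) (hVC : V ≤ C) :
    -- well-definedness of `(A,B) ↦ (A, B ⊓ C)`
    (∀ A B : Submodule R P, IsSplitting A B → A ≤ V → W ≤ B →
      IsSplittingOf C A (B ⊓ C) ∧ A ≤ V) ∧
    -- well-definedness of the inverse `(A',B') ↦ (A', B' ⊔ W)`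
    (∀ A' B' : Submodule R P, IsSplittingOf C A' B' → A' ≤ V →
      IsSplitting A' (B' ⊔ W) ∧ A' ≤ V ∧ W ≤ B' ⊔ W) ∧
    -- the two maps are mutually inverse
    (∀ A B : Submodule R P, IsSplitting A B → A ≤ V → W ≤ B → (B ⊓ C) ⊔ W = B) ∧
    (∀ A' B' : Submodule R P, IsSplittingOf C A' B' → A' ≤ V → (B' ⊔ W) ⊓ C = B') ∧
    -- the forward map is an order-embedding (preserves and reflects the order)
    (∀ A B A₁ B₁ : Submodule R P,
      IsSplitting A B → A ≤ V → W ≤ B → IsSplitting A₁ B₁ → A₁ ≤ V → W ≤ B₁ →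
      (SplitLE A B A₁ B₁ ↔ SplitLE A (B ⊓ C) A₁ (B₁ ⊓ C))) :=
  stmt9_general V W C hproper hWC hVC

end
end
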